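/- arXiv:2008.03630 — 4 statements merged into one kernel-verified Lean document; each statement's English description precedes it below -/
import Mathlib

section
/- Let $\Phi$ be a root system of type $B_r$ ($r \ge 3$) with simple roots $\alpha_1,\dots,\alpha_r$ ($\alpha_r$ short) in the standard Bourbaki labelling, and let $m$ be a positive integer. Define $f_X$ on positive coroots by $f_X(\beta^\vee) = \sum_{i=1}^{r} \langle \omega_{\alpha_i}/n_i, \beta^\vee\rangle$ where $n_i = 2m$ for $i < r$ and $n_r = m$. Define $f_Y$ on positive roots by $f_Y(\beta) = \langle \rho^\vee, \beta/n_\beta\rangle$ where $n_\beta = 2m$ if $\beta$ is long and $n_\beta = m$ if $\beta$ is short, and $\rho^\vee$ is the half-sum of positive coroots. Then the image of $f_X$ on positive coroots equals the image of $f_Y$ on positive roots, and both equal $\{k/(2m) : 1 \le k \le 2r\}$. -/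
open scoped BigOperators

/-- Standard basis vector `e i` of `ℚ^r`. -/
def stdE (r : ℕ) (i : Fin r) : Fin r → ℚ := fun k => if k = i then 1 else 0

/-- Standard pairing (dot product) on `ℚ^r`, used as the pairing between the
weight space and the coweight space in the standard coordinates. -/
def dotQ {r : ℕ} (x y : Fin r → ℚ) : ℚ := ∑ k, x k * y k

/-- Positive roots of type `B_r` in the standard coordinates:
`e_i ± e_j` for `i < j` (long) and `e_i` (short). -/
def posRootsB (r : ℕ) : Set (Fin r → ℚ) :=
  {v | (∃ i j : Fin r, i < j ∧ (v = stdE r i - stdE r j ∨ v = stdE r i + stdE r j)) ∨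
       (∃ i : Fin r, v = stdE r i)}

/-- Positive coroots of type `B_r`: `e_i ± e_j` for `i < j` and `2e_i`. -/
def posCorootsB (r : ℕ) : Set (Fin r → ℚ) :=
  {v | (∃ i j : Fin r, i < j ∧ (v = stdE r i - stdE r j ∨ v = stdE r i + stdE r j)) ∨
       (∃ i : Fin r, v = (2 : ℚ) • stdE r i)}

/-- Fundamental weights of `B_r` (Bourbaki labelling, `0`-based index):
`ω_{α_i} = e_1 + ⋯ + e_i` for `i < r`, and `ω_{α_r} = (e_1 + ⋯ + e_r)/2`. -/
def omegaB (r : ℕ) (i : Fin r) : Fin r → ℚ :=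
  if (i : ℕ) = r - 1 then (fun _ => 1/2) else (fun k => if (k : ℕ) ≤ (i : ℕ) then 1 else 0)

/-- `ρ^∨`, the half-sum of the positive coroots of `B_r`; in standard coordinates
it equals `(r, r-1, …, 1)`. -/
def rhoCheckB (r : ℕ) : Fin r → ℚ := fun k => (r : ℚ) - (k : ℕ)

/-!
Since `ω_{α_i}` has coordinates `1` in positions `≤ i` (and `ω_{α_r}` has all coordinates `1/2`),
`∑ ω_{α_i}/n_i = ρ^∨/(2m)`, so `f_X(β^∨) = ⟨ρ^∨, β^∨⟩/(2m)`. Dividing a root by `n_β` is the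
same as dividing `β^∨ = 2β/⟨β,β⟩` by `2m`, so also `f_Y(β) = ⟨ρ^∨, β^∨⟩/(2m)`. Both images are
thus the heights `⟨ρ^∨, β^∨⟩` of the positive coroots scaled by `1/(2m)`, and these heights are
exactly `1, …, 2r`: the even ones are the heights of the `2e_i`, `1` that of `e_i - e_{i+1}`,
and the odd ones from `3` on those of the `e_i + e_{i+1}`.
-/

lemma stdE_eq_single (r : ℕ) (i : Fin r) : stdE r i = Pi.single i 1 := by
  ext k
  simp [stdE, Pi.single_apply]

lemma dotQ_eq_dotProduct {r : ℕ} (x y : Fin r → ℚ) : dotQ x y = x ⬝ᵥ y := rfl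

section TypeB

variable {r : ℕ}

lemma dotQ_rhoCheckB_sub (a b : Fin r) :
    dotQ (rhoCheckB r) (stdE r a - stdE r b) = (b : ℕ) - (a : ℕ) := by
  simp [dotQ_eq_dotProduct, stdE_eq_single, dotProduct_sub, rhoCheckB]

lemma dotQ_rhoCheckB_add (a b : Fin r) :
    dotQ (rhoCheckB r) (stdE r a + stdE r b) = 2 * r - (a : ℕ) - (b : ℕ) := by
  simp only [stdE_eq_single, dotQ_eq_dotProduct, dotProduct_add, dotProduct_single, rhoCheckB,
    mul_one]
  ring

lemma dotQ_rhoCheckB_two_smul (a : Fin r) :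
    dotQ (rhoCheckB r) ((2 : ℚ) • stdE r a) = 2 * (r - (a : ℕ)) := by
  simp [dotQ_eq_dotProduct, stdE_eq_single, rhoCheckB]

lemma dotQ_stdE_stdE (a : Fin r) : dotQ (stdE r a) (stdE r a) = 1 := by
  simp [dotQ_eq_dotProduct, stdE_eq_single]

lemma dotQ_stdE_sub_stdE {a b : Fin r} (h : a ≠ b) :
    dotQ (stdE r a - stdE r b) (stdE r a - stdE r b) = 2 := by
  norm_num [dotQ_eq_dotProduct, stdE_eq_single, h, h.symm]

lemma dotQ_stdE_add_stdE {a b : Fin r} (h : a ≠ b) :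
    dotQ (stdE r a + stdE r b) (stdE r a + stdE r b) = 2 := by
  norm_num [dotQ_eq_dotProduct, stdE_eq_single, h, h.symm]

def coroot (v : Fin r → ℚ) : Fin r → ℚ := (2 / dotQ v v) • v

lemma dotQ_self_of_mem_posRootsB {v : Fin r → ℚ} (hv : v ∈ posRootsB r) :
    dotQ v v = 2 ∨ dotQ v v = 1 := by
  rcases hv with ⟨a, b, hab, rfl | rfl⟩ | ⟨a, rfl⟩
  · exact .inl (dotQ_stdE_sub_stdE hab.ne)
  · exact .inl (dotQ_stdE_add_stdE hab.ne)
  · exact .inr (dotQ_stdE_stdE a)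

lemma image_coroot_posRootsB : coroot '' posRootsB r = posCorootsB r := by
  ext w
  constructor
  · rintro ⟨v, ⟨a, b, hab, rfl | rfl⟩ | ⟨a, rfl⟩, rfl⟩
    · refine .inl ⟨a, b, hab, .inl ?_⟩
      simp [coroot, dotQ_stdE_sub_stdE hab.ne]
    · refine .inl ⟨a, b, hab, .inr ?_⟩
      simp [coroot, dotQ_stdE_add_stdE hab.ne]
    · exact .inr ⟨a, by simp [coroot, dotQ_stdE_stdE]⟩
  · rintro (⟨a, b, hab, rfl | rfl⟩ | ⟨a, rfl⟩)
    · exact ⟨_, .inl ⟨a, b, hab, .inl rfl⟩, by simp [coroot, dotQ_stdE_sub_stdE hab.ne]⟩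
    · exact ⟨_, .inl ⟨a, b, hab, .inr rfl⟩, by simp [coroot, dotQ_stdE_add_stdE hab.ne]⟩
    · exact ⟨_, .inr ⟨a, rfl⟩, by simp [coroot, dotQ_stdE_stdE]⟩

lemma dotQ_div_ite_eq_dotQ_coroot_div (ρ v : Fin r → ℚ) (hv : dotQ v v = 2 ∨ dotQ v v = 1)
    (c : ℚ) :
    dotQ ρ v / (if dotQ v v = 2 then 2 * c else c) = dotQ ρ (coroot v) / (2 * c) := by
  rcases hv with hv | hv
  · simp [coroot, hv]
  · simp [coroot, hv, dotQ_eq_dotProduct, mul_div_mul_left]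

lemma sum_omegaB_div_apply (m : ℕ) (k : Fin r) :
    ∑ i : Fin r, omegaB r i k / (if (i : ℕ) = r - 1 then (m : ℚ) else 2 * m)
      = rhoCheckB r k / (2 * m) := by
  have hterm : ∀ i : Fin r, omegaB r i k / (if (i : ℕ) = r - 1 then (m : ℚ) else 2 * m)
      = if k ≤ i then 1 / (2 * (m : ℚ)) else 0 := by
    intro i
    by_cases hi : (i : ℕ) = r - 1
    · have hki : k ≤ i := by rw [Fin.le_def]; omega
      simp only [omegaB, hi, if_true, if_pos hki]
      ring
    · simp only [omegaB, if_neg hi]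
      by_cases hki : k ≤ i
      · simp [hki, Fin.le_def.mp hki]
      · simp [hki, Fin.le_def.not.mp hki]
  rw [Finset.sum_congr rfl fun i _ => hterm i, Finset.sum_ite, Finset.sum_const_zero, add_zero,
    Finset.sum_const, nsmul_eq_mul, Finset.filter_le_eq_Ici, Fin.card_Ici, Nat.cast_sub k.is_lt.le,
    rhoCheckB]
  ring

lemma sum_dotQ_omegaB_div (m : ℕ) (v : Fin r → ℚ) :
    ∑ i : Fin r, dotQ (omegaB r i) v / (if (i : ℕ) = r - 1 then (m : ℚ) else 2 * m)
      = dotQ (rhoCheckB r) v / (2 * m) := by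
  simp only [dotQ, Finset.sum_div]
  rw [Finset.sum_comm]
  refine Finset.sum_congr rfl fun k _ => ?_
  simp only [mul_div_right_comm _ (v k)]
  rw [← Finset.sum_mul, sum_omegaB_div_apply]

lemma image_dotQ_rhoCheckB_posCorootsB (hr : 2 ≤ r) :
    dotQ (rhoCheckB r) '' posCorootsB r = (Nat.cast : ℕ → ℚ) '' Set.Icc 1 (2 * r) := by
  ext x
  constructor
  · rintro ⟨v, ⟨a, b, hab, rfl | rfl⟩ | ⟨a, rfl⟩, rfl⟩
    · have hab' : (a : ℕ) < b := hab
      refine ⟨b - a, ⟨by omega, by omega⟩, ?_⟩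
      rw [dotQ_rhoCheckB_sub, Nat.cast_sub hab'.le]
    · have hab' : (a : ℕ) < b := hab
      refine ⟨2 * r - a - b, ⟨by omega, by omega⟩, ?_⟩
      rw [dotQ_rhoCheckB_add, Nat.cast_sub (by omega), Nat.cast_sub (by omega)]
      push_cast
      ring
    · refine ⟨2 * (r - a), ⟨by omega, by omega⟩, ?_⟩
      rw [dotQ_rhoCheckB_two_smul, Nat.cast_mul, Nat.cast_sub a.is_lt.le]
      push_cast
      ring
  · rintro ⟨k, ⟨hk1, hk2⟩, rfl⟩
    obtain ⟨j, rfl | rfl⟩ := Nat.even_or_odd' k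
    · refine ⟨_, .inr ⟨⟨r - j, by omega⟩, rfl⟩, ?_⟩
      rw [dotQ_rhoCheckB_two_smul, Nat.cast_sub (by omega)]
      push_cast
      ring
    · rcases Nat.eq_zero_or_pos j with rfl | hj
      · refine ⟨_, .inl ⟨⟨0, by omega⟩, ⟨1, by omega⟩, Fin.mk_lt_mk.mpr one_pos, .inl rfl⟩, ?_⟩
        rw [dotQ_rhoCheckB_sub]
        norm_num
      · refine ⟨_, .inl ⟨⟨r - 1 - j, by omega⟩, ⟨r - j, by omega⟩,
          Fin.mk_lt_mk.mpr (by omega), .inr rfl⟩, ?_⟩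
        rw [dotQ_rhoCheckB_add, Nat.cast_sub (by omega), Nat.cast_sub (by omega),
          Nat.cast_sub (by omega)]
        push_cast
        ring

end TypeB

theorem statement1_general (r m : ℕ) (hr : 3 ≤ r) :
    ((fun v => ∑ i : Fin r, dotQ (omegaB r i) v /
        (if (i : ℕ) = r - 1 then (m : ℚ) else 2 * m)) '' posCorootsB r
      = (fun v => dotQ (rhoCheckB r) v /
          (if dotQ v v = 2 then (2 * (m : ℚ)) else (m : ℚ))) '' posRootsB r) ∧
    ((fun v => ∑ i : Fin r, dotQ (omegaB r i) v /
        (if (i : ℕ) = r - 1 then (m : ℚ) else 2 * m)) '' posCorootsB r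
      = {x : ℚ | ∃ k : ℕ, 1 ≤ k ∧ k ≤ 2 * r ∧ x = (k : ℚ) / (2 * m)}) := by
  have hX : (fun v => ∑ i : Fin r, dotQ (omegaB r i) v /
        (if (i : ℕ) = r - 1 then (m : ℚ) else 2 * m)) '' posCorootsB r
      = (fun v => dotQ (rhoCheckB r) v / (2 * m)) '' posCorootsB r := by
    simp only [sum_dotQ_omegaB_div]
  have hY : (fun v => dotQ (rhoCheckB r) v /
          (if dotQ v v = 2 then (2 * (m : ℚ)) else (m : ℚ))) '' posRootsB r
      = (fun v => dotQ (rhoCheckB r) v / (2 * m)) '' posCorootsB r := by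
    rw [← image_coroot_posRootsB, Set.image_image]
    exact Set.image_congr fun v hv =>
      dotQ_div_ite_eq_dotQ_coroot_div _ v (dotQ_self_of_mem_posRootsB hv) _
  have hheights : (fun v => dotQ (rhoCheckB r) v / (2 * m)) '' posCorootsB r
      = {x : ℚ | ∃ k : ℕ, 1 ≤ k ∧ k ≤ 2 * r ∧ x = (k : ℚ) / (2 * m)} := by
    rw [← Set.image_image (· / (2 * (m : ℚ))), image_dotQ_rhoCheckB_posCorootsB (by omega),
      Set.image_image]
    ext x
    simp [eq_comm, and_assoc]
  exact ⟨hX.trans hY.symm, hX.trans hheights⟩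

/-- Type `B_r` (`r ≥ 3`), Bourbaki labelling with `α_r` short, `m ≥ 1`.
With `n_i = 2m` for `i < r` and `n_r = m`, set `f_X(β^∨) = ∑ᵢ ⟨ω_{α_i}/n_i, β^∨⟩` on
positive coroots, and `f_Y(β) = ⟨ρ^∨, β/n_β⟩` on positive roots, where `n_β = 2m` for
`β` long (i.e. `⟨β,β⟩ = 2`) and `n_β = m` for `β` short.  Then the images of `f_X` and
`f_Y` coincide and both equal `{k/(2m) : 1 ≤ k ≤ 2r}`. -/
theorem statement1 (r m : ℕ) (hr : 3 ≤ r) (hm : 0 < m) :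
    ((fun v => ∑ i : Fin r, dotQ (omegaB r i) v /
        (if (i : ℕ) = r - 1 then (m : ℚ) else 2 * m)) '' posCorootsB r
      = (fun v => dotQ (rhoCheckB r) v /
          (if dotQ v v = 2 then (2 * (m : ℚ)) else (m : ℚ))) '' posRootsB r) ∧
    ((fun v => ∑ i : Fin r, dotQ (omegaB r i) v /
        (if (i : ℕ) = r - 1 then (m : ℚ) else 2 * m)) '' posCorootsB r
      = {x : ℚ | ∃ k : ℕ, 1 ≤ k ∧ k ≤ 2 * r ∧ x = (k : ℚ) / (2 * m)}) :=
  statement1_general r m hr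
end

section
/- Let $Y = \mathbb{Z}^r$ be the cocharacter lattice of $\mathrm{Sp}_{2r}$ with simple coroots $\alpha_i^\vee = e_i - e_{i+1}$ for $1 \le i < r$ and $\alpha_r^\vee = e_r$, and let $Q: Y \to \mathbb{Z}$ be the Weyl-invariant quadratic form with $Q(\alpha_r^\vee) = 1$ (equivalently $Q(\sum c_i e_i) = \sum c_i^2$). Let $n = 2m$ with $m$ even, and set $Y_{Q,n} = \{y \in Y : B_Q(y,z) \in n\mathbb{Z}\ \forall z \in Y\}$ where $B_Q$ is the associated bilinear form, and let $Y_{Q,n}^{sc}$ be the lattice spanned by the elements $n_{\alpha}\alpha^\vee$ with $n_\alpha = n/\gcd(n, Q(\alpha^\vee))$ for simple roots $\alpha$. Then $Y_{Q,n} = m\mathbb{Z}^r$, and $Y_{Q,n}^{sc} = \{\sum_i c_i \alpha_i^\vee : m \mid c_i \text{ for } i < r,\ n \mid c_r\}$. -/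
/-!
Since `B_Q(y, z) = 2 ⟨y, z⟩`, testing against the basis vectors shows `y ∈ Y_{Q,n}` iff
`n ∣ 2 yᵢ` for all `i`, i.e. `m ∣ yᵢ` when `n = 2m`. For the second part, `Q(αᵢ^∨) = 2` for
`i < r` and `Q(α_r^∨) = 1` give `n_{αᵢ} = m` and `n_{α_r} = 2m`, and the subgroup generated by
the `aᵢ • vᵢ` is `{∑ cᵢ • vᵢ : aᵢ ∣ cᵢ}`, whatever the vectors `vᵢ`.
-/

open scoped BigOperators

/-- Standard basis vector of `ℤ^r`. -/
def eZ (r : ℕ) (i : Fin r) : Fin r → ℤ := fun k => if k = i then 1 else 0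

/-- The Weyl-invariant quadratic form on the cocharacter lattice `Y = ℤ^r` of
`Sp_{2r}` with `Q(α_r^∨) = 1`: `Q(∑ cᵢ eᵢ) = ∑ cᵢ²`. -/
def QSp (r : ℕ) (y : Fin r → ℤ) : ℤ := ∑ i, (y i) ^ 2

/-- The associated bilinear form `B_Q(y,z) = Q(y+z) - Q(y) - Q(z)`. -/
def BQSp (r : ℕ) (y z : Fin r → ℤ) : ℤ := QSp r (y + z) - QSp r y - QSp r z

/-- Simple coroots of `Sp_{2r}`: `α_i^∨ = e_i - e_{i+1}` for `i < r`, `α_r^∨ = e_r`. -/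
def simpleCorootC (r : ℕ) (i : Fin r) : Fin r → ℤ :=
  if h : (i : ℕ) + 1 < r then eZ r i - eZ r ⟨(i : ℕ) + 1, h⟩ else eZ r i

/-- `n_α = n / gcd(n, Q(α^∨))` for a simple root `α`. -/
def nAlphaC (r n : ℕ) (i : Fin r) : ℕ := n / Nat.gcd n (QSp r (simpleCorootC r i)).toNat

/-- `Y_{Q,n} = {y ∈ Y : B_Q(y, z) ∈ nℤ for all z ∈ Y}`. -/
def YQnSp (r n : ℕ) : Set (Fin r → ℤ) := {y | ∀ z, (n : ℤ) ∣ BQSp r y z}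

/-- `Y_{Q,n}^{sc}`, the sublattice spanned by the rescaled simple coroots `n_α α^∨`. -/
def YQnscSp (r n : ℕ) : AddSubgroup (Fin r → ℤ) :=
  AddSubgroup.closure {v | ∃ i : Fin r, v = (nAlphaC r n i : ℤ) • simpleCorootC r i}

theorem eZ_eq_single (r : ℕ) (i : Fin r) : eZ r i = Pi.single i 1 := by
  funext k
  simp [eZ, Pi.single_apply]

theorem QSp_eq_dotProduct (r : ℕ) (y : Fin r → ℤ) : QSp r y = y ⬝ᵥ y := by
  simp [QSp, dotProduct, sq]

theorem BQSp_eq_two_mul_dotProduct (r : ℕ) (y z : Fin r → ℤ) :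
    BQSp r y z = 2 * (y ⬝ᵥ z) := by
  simp only [BQSp, QSp_eq_dotProduct, add_dotProduct, dotProduct_add, dotProduct_comm z y]
  ring

theorem YQnSp_eq (r n : ℕ) : YQnSp r n = {y | ∀ i, (n : ℤ) ∣ 2 * y i} := by
  ext y
  simp only [YQnSp, BQSp_eq_two_mul_dotProduct, Set.mem_ofPred_eq]
  refine ⟨fun h i => by simpa [eZ_eq_single] using h (eZ r i), fun h z => ?_⟩
  rw [dotProduct, Finset.mul_sum]
  exact Finset.dvd_sum fun i _ => by rw [← mul_assoc]; exact (h i).mul_right _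

theorem QSp_simpleCorootC (r : ℕ) (i : Fin r) :
    QSp r (simpleCorootC r i) = if (i : ℕ) + 1 < r then 2 else 1 := by
  unfold simpleCorootC
  split_ifs with h
  · have hne : (⟨(i : ℕ) + 1, h⟩ : Fin r) ≠ i := Fin.ne_of_val_ne (by simp)
    simp [QSp_eq_dotProduct, eZ_eq_single, dotProduct_sub, hne, hne.symm]
  · simp [QSp_eq_dotProduct, eZ_eq_single]

theorem nAlphaC_two_mul (r m : ℕ) (i : Fin r) :
    nAlphaC r (2 * m) i = if (i : ℕ) + 1 < r then m else 2 * m := by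
  unfold nAlphaC
  split_ifs with h <;> simp [QSp_simpleCorootC, h]

theorem AddSubgroup.mem_closure_range_zsmul_iff {ι M : Type*} [Fintype ι] [AddCommGroup M]
    (a : ι → ℤ) (v : ι → M) (y : M) :
    y ∈ AddSubgroup.closure (Set.range fun i => a i • v i) ↔
      ∃ c : ι → ℤ, y = ∑ i, c i • v i ∧ ∀ i, a i ∣ c i := by
  rw [← Submodule.span_int_eq_addSubgroupClosure, Submodule.mem_toAddSubgroup,
    Submodule.mem_span_range_iff_exists_fun]
  constructor
  · rintro ⟨d, rfl⟩
    exact ⟨fun i => d i * a i, by simp [mul_smul], fun i => dvd_mul_left _ _⟩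
  · rintro ⟨c, rfl, hc⟩
    choose d hd using hc
    exact ⟨d, Finset.sum_congr rfl fun i _ => by rw [hd, mul_smul, smul_comm]⟩

theorem YQnscSp_eq_closure_range (r n : ℕ) :
    YQnscSp r n =
      AddSubgroup.closure (Set.range fun i => (nAlphaC r n i : ℤ) • simpleCorootC r i) := by
  simp only [YQnscSp, Set.range, eq_comm]

theorem forall_nAlphaC_two_mul_dvd_iff (r m : ℕ) (hr : 0 < r) (c : Fin r → ℤ) :
    (∀ i, (nAlphaC r (2 * m) i : ℤ) ∣ c i) ↔
      (∀ i : Fin r, (i : ℕ) + 1 < r → (m : ℤ) ∣ c i) ∧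
        (2 * (m : ℤ)) ∣ c ⟨r - 1, Nat.sub_one_lt_of_lt hr⟩ := by
  simp only [nAlphaC_two_mul]
  constructor
  · intro h
    refine ⟨fun i hi => by simpa [hi] using h i, ?_⟩
    simpa [show ¬ r - 1 + 1 < r by omega] using h ⟨r - 1, Nat.sub_one_lt_of_lt hr⟩
  · rintro ⟨hlt, hlast⟩ i
    split_ifs with hi
    · exact hlt i hi
    · have hi_last : i = ⟨r - 1, Nat.sub_one_lt_of_lt hr⟩ := Fin.ext (by simp only; omega)
      rw [hi_last]
      exact_mod_cast hlast

/-- For `Sp_{2r}` with `Q(α_r^∨) = 1` and `n = 2m`, `m` even: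
`Y_{Q,n} = mℤ^r`, and `Y_{Q,n}^{sc} = {∑ cᵢ αᵢ^∨ : m ∣ cᵢ for i < r, n ∣ c_r}`. -/
theorem statement4 (r m : ℕ) (hr : 0 < r) :
    YQnSp r (2 * m) = {y | ∀ i, (m : ℤ) ∣ y i} ∧
    (YQnscSp r (2 * m) : Set (Fin r → ℤ)) =
      {y | ∃ c : Fin r → ℤ, y = ∑ i, c i • simpleCorootC r i ∧
        (∀ i : Fin r, (i : ℕ) + 1 < r → (m : ℤ) ∣ c i) ∧
        (2 * (m : ℤ)) ∣ c ⟨r - 1, by omega⟩} := by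
  refine ⟨?_, ?_⟩
  · rw [YQnSp_eq]
    ext y
    simp only [Set.mem_ofPred_eq, Nat.cast_mul, Nat.cast_ofNat]
    exact forall_congr' fun i => mul_dvd_mul_iff_left two_ne_zero
  · ext y
    rw [SetLike.mem_coe, YQnscSp_eq_closure_range, AddSubgroup.mem_closure_range_zsmul_iff]
    simp only [Set.mem_ofPred_eq, forall_nAlphaC_two_mul_dvd_iff r m hr]
end

section
/- Let $(X, \Phi, \Delta; Y, \Phi^\vee, \Delta^\vee)$ be the root datum of a split reductive group with root system of rank at least 2, and suppose $\alpha \in \Delta$ satisfies $\langle \alpha, y\rangle \in 2\mathbb{Z}$ for all $y \in Y$. Then $\alpha$ is a long simple root and the root system is of type $C_r$ (where for rank considerations type $C_1 = A_1$ counts its root as long). -/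
/-!
Grow from `α` a chain `α = c 0, c 1, …, c n` of simple roots spanning a `C_{n+1}` subdiagram
with `α` at its long end, such that only the far end `c n` has neighbours outside it.
Positive definiteness rules out every nonzero `x ≥ 0` with `(A x)_i ≤ 0` on the support of `x`.
Testing this on `x` equal to `1` on the chain plus small weights at outside neighbours of
`c n` shows that there is at most one such neighbour `v`, joined by a forced bond: a simple
bond if `n > 0`, and for `n = 0` the double bond `A α v = -2`, since `A α v` is even.
Hence the chain can be extended until it has no outside neighbours, and then by
connectedness it contains every simple root.
-/

open scoped BigOperators

/-- The Cartan matrix of type `C_r` (Bourbaki labelling, `0`-based indices, `α_r`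
the unique long simple root; for `r = 1` this is the `A_1` Cartan matrix, the root
counting as long): `A i i = 2`, `A i j = -1` for adjacent `i,j` except
`A_{r-1, r-2} = ⟨α_r, α_{r-1}^∨⟩ = -2`, and `A i j = 0` otherwise. -/
def cartanMatrixC (r : ℕ) : Fin r → Fin r → ℤ := fun i j =>
  if i = j then 2
  else if (i : ℕ) = (j : ℕ) + 1 ∧ (i : ℕ) = r - 1 then -2
  else if (i : ℕ) = (j : ℕ) + 1 ∨ (j : ℕ) = (i : ℕ) + 1 then -1
  else 0

open Finset

/-- The `C`-type Cartan matrix with indices counted from the long simple root, which makes it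
independent of the rank (`cartanMatrixC_rev_rev`). -/
def cartanMatrixCRev (k l : ℕ) : ℤ :=
  if k = l then 2
  else if k = 0 ∧ l = 1 then -2
  else if k = l + 1 ∨ l = k + 1 then -1
  else 0

theorem cartanMatrixC_rev_rev {r : ℕ} (p q : Fin r) :
    cartanMatrixC r p.rev q.rev = cartanMatrixCRev p q := by
  unfold cartanMatrixC cartanMatrixCRev
  simp only [Fin.ext_iff, Fin.val_rev]
  split_ifs <;> omega

theorem eq_of_cartanMatrixCRev_eq_two {k l : ℕ} (h : cartanMatrixCRev k l = 2) : k = l := by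
  unfold cartanMatrixCRev at h
  split_ifs at h <;> first | assumption | omega

theorem cartanMatrixCRev_eq_zero {k l : ℕ} (h : k + 2 ≤ l ∨ l + 2 ≤ k) :
    cartanMatrixCRev k l = 0 := by
  unfold cartanMatrixCRev
  split_ifs <;> omega

theorem sum_range_cartanMatrixCRev {k m : ℕ} (hkm : k + 2 ≤ m) :
    ∑ l ∈ range m, cartanMatrixCRev k l = 0 := by
  rw [← sum_subset (range_subset_range.2 hkm) fun l _ hl =>
    cartanMatrixCRev_eq_zero (by simp at hl; omega)]
  rcases k with _ | k
  · simp [sum_range_succ, cartanMatrixCRev]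
  · rw [sum_range_succ, sum_range_succ, sum_range_succ,
      sum_eq_zero fun l hl => cartanMatrixCRev_eq_zero (by simp at hl; omega)]
    simp [cartanMatrixCRev]

section

variable {ι : Type*} [Fintype ι]

def NoNonnegNullVector (A : ι → ι → ℤ) : Prop :=
  ∀ x : ι → ℚ, 0 ≤ x → (∀ i, 0 < x i → ∑ j, (A i j : ℚ) * x j ≤ 0) → x = 0

theorem noNonnegNullVector_of_posDef {A : ι → ι → ℤ} {d : ι → ℚ} (hd : ∀ i, 0 < d i)
    (hQ : ∀ x : ι → ℚ, x ≠ 0 → 0 < ∑ i, ∑ j, d i * A i j * x i * x j) :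
    NoNonnegNullVector A := by
  intro x hx hrow
  by_contra hx0
  refine (hQ x hx0).not_ge ?_
  calc ∑ i, ∑ j, d i * A i j * x i * x j = ∑ i, d i * x i * ∑ j, (A i j : ℚ) * x j := by
        simp_rw [mul_sum]
        exact sum_congr rfl fun i _ => sum_congr rfl fun j _ => by ring
    _ ≤ 0 := sum_nonpos fun i _ => by
        rcases (hx i).eq_or_lt with h | h
        · simp [← h]
        · exact mul_nonpos_of_nonneg_of_nonpos (mul_pos (hd i) h).le (hrow i h)

end

section

variable {ι : Type*} [DecidableEq ι]

/-- `α = c 0, c 1, …, c n` span a `C_{n+1}` subdiagram with `α` at its long end, and only the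
far end `c n` may have neighbours outside it. -/
structure IsCChain (A : ι → ι → ℤ) (α : ι) (n : ℕ) (c : ℕ → ι) : Prop where
  zero : c 0 = α
  cartan : ∀ k ≤ n, ∀ l ≤ n, A (c k) (c l) = cartanMatrixCRev k l
  closed : ∀ k < n, ∀ u, A (c k) u ≠ 0 → u ∈ (range (n + 1)).image c

namespace IsCChain

variable {A : ι → ι → ℤ} {α : ι} {n : ℕ} {c : ℕ → ι}

theorem injOn (hc : IsCChain A α n c) : Set.InjOn c (range (n + 1)) := by
  intro k hk l hl h
  simp only [coe_range, Set.mem_Iio] at hk hl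
  refine eq_of_cartanMatrixCRev_eq_two ?_
  rw [← hc.cartan k (by omega) l (by omega), h, hc.cartan l (by omega) l (by omega)]
  simp [cartanMatrixCRev]

theorem apply_eq_zero_of_notMem (hzero : ∀ i j, A i j = 0 ↔ A j i = 0)
    (hc : IsCChain A α n c) {k : ℕ} (hk : k < n) {u : ι} (hu : u ∉ (range (n + 1)).image c) :
    A (c k) u = 0 ∧ A u (c k) = 0 := by
  have h : A (c k) u = 0 := by
    by_contra h
    exact hu (hc.closed k hk u h)
  exact ⟨h, (hzero _ _).1 h⟩

theorem sum_apply_of_notMem (hzero : ∀ i j, A i j = 0 ↔ A j i = 0)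
    (hc : IsCChain A α n c) {u : ι} (hu : u ∉ (range (n + 1)).image c) :
    ∑ l ∈ range (n + 1), A u (c l) = A u (c n) := by
  rw [sum_range_succ, sum_eq_zero fun l hl =>
    (hc.apply_eq_zero_of_notMem hzero (mem_range.1 hl) hu).2, zero_add]

theorem sum_apply_of_lt (hc : IsCChain A α n c) {k : ℕ} (hk : k < n) :
    ∑ l ∈ range (n + 1), A (c k) (c l) = 0 := by
  rw [sum_congr rfl fun l hl => hc.cartan k hk.le l (Nat.lt_succ_iff.1 (mem_range.1 hl))]
  exact sum_range_cartanMatrixCRev (by omega)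

theorem sum_apply_last (hc : IsCChain A α n c) :
    ∑ l ∈ range (n + 1), A (c n) (c l) = -cartanMatrixCRev n (n + 1) := by
  rw [sum_congr rfl fun l hl => hc.cartan n le_rfl l (Nat.lt_succ_iff.1 (mem_range.1 hl)),
    eq_neg_iff_add_eq_zero, ← sum_range_succ]
  exact sum_range_cartanMatrixCRev le_rfl

end IsCChain

variable [Fintype ι]

namespace IsCChain

variable {A : ι → ι → ℤ} {α : ι} {n : ℕ} {c : ℕ → ι}

theorem card_le (hc : IsCChain A α n c) : n + 1 ≤ Fintype.card ι := by
  simpa [card_image_of_injOn hc.injOn] using card_le_univ ((range (n + 1)).image c)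

theorem bijective (hc : IsCChain A α n c) (hcover : (range (n + 1)).image c = univ) :
    Function.Bijective fun k : Fin (n + 1) => c k := by
  refine ⟨fun k l h => Fin.ext (hc.injOn (mem_coe.2 (mem_range.2 k.is_lt))
    (mem_coe.2 (mem_range.2 l.is_lt)) h), fun u => ?_⟩
  obtain ⟨k, hk, rfl⟩ := mem_image.1 (hcover ▸ mem_univ u)
  exact ⟨⟨k, mem_range.1 hk⟩, rfl⟩

theorem false_of_test (hA : NoNonnegNullVector A) (hdiag : ∀ i, A i i = 2)
    (hzero : ∀ i j, A i j = 0 ↔ A j i = 0) (hc : IsCChain A α n c) {v w : ι}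
    (hv : v ∉ (range (n + 1)).image c) (hw : w ∉ (range (n + 1)).image c) {a b : ℚ}
    (ha : 0 ≤ a) (hb : 0 ≤ b)
    (hend : a * A (c n) v + b * A (c n) w ≤ cartanMatrixCRev n (n + 1))
    (hrow_v : A v (c n) + 2 * a + b * A v w ≤ 0)
    (hrow_w : A w (c n) + a * A w v + 2 * b ≤ 0) : False := by
  -- `x` is `1` on the chain, `a` at `v` and `b` at `w`; its rows at `c n`, `v`, `w` are the
  -- three hypotheses, and its other rows on the chain vanish.
  set S := (range (n + 1)).image c
  set x : ι → ℚ := fun j =>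
    (if j ∈ S then 1 else 0) + (if j = v then a else 0) + (if j = w then b else 0)
  have hrow (i : ι) : ∑ j, (A i j : ℚ) * x j =
      ((∑ l ∈ range (n + 1), A i (c l) : ℤ) : ℚ) + a * A i v + b * A i w := by
    simp only [x, mul_add, mul_ite, mul_one, mul_zero, sum_add_distrib, sum_ite_mem, univ_inter,
      sum_ite_eq', mem_univ, if_true, Int.cast_sum]
    rw [sum_image hc.injOn]
    ring
  have hxS {i : ι} (hi : i ∈ S) : x i = 1 := by
    simp [x, hi, ne_of_mem_of_not_mem hi hv, ne_of_mem_of_not_mem hi hw]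
  have hx0 : x ≠ 0 := fun h => by
    simpa [h] using hxS (mem_image_of_mem c (mem_range.2 n.succ_pos))
  refine hx0 (hA x (fun j => by positivity) fun i hi => ?_)
  rw [hrow]
  by_cases hiS : i ∈ S
  · obtain ⟨k, hk, rfl⟩ := mem_image.1 hiS
    rcases (Nat.lt_succ_iff.1 (mem_range.1 hk)).lt_or_eq with hk | rfl
    · simp [hc.sum_apply_of_lt hk, (hc.apply_eq_zero_of_notMem hzero hk hv).1,
        (hc.apply_eq_zero_of_notMem hzero hk hw).1]
    · rw [hc.sum_apply_last]
      push_cast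
      linarith
  · rw [hc.sum_apply_of_notMem hzero hiS]
    by_cases hiv : i = v
    · subst hiv
      rw [hdiag]
      push_cast
      linarith
    by_cases hiw : i = w
    · subst hiw
      rw [hdiag]
      push_cast
      linarith
    · simp [x, hiS, hiv, hiw] at hi

theorem end_edge (hA : NoNonnegNullVector A) (hdiag : ∀ i, A i i = 2)
    (hoff : ∀ i j, i ≠ j → A i j ≤ 0) (hzero : ∀ i j, A i j = 0 ↔ A j i = 0)
    (heven : ∀ j, 2 ∣ A α j) (hc : IsCChain A α n c) {v : ι}
    (hv : v ∉ (range (n + 1)).image c) (hadj : A (c n) v ≠ 0) :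
    A (c n) v = cartanMatrixCRev n (n + 1) ∧ A v (c n) = -1 := by
  have hne : c n ≠ v := fun h => hv (h ▸ mem_image_of_mem c (self_mem_range_succ n))
  have hnv : A (c n) v ≤ -1 := by have := hoff _ _ hne; omega
  have hvn : A v (c n) ≤ -1 := by
    have := hoff _ _ hne.symm; have := (hzero _ _).not.2 hadj; omega
  have hlow : 2 * cartanMatrixCRev n (n + 1) < A (c n) v := by
    by_contra! h
    qify at h hvn
    refine hc.false_of_test hA hdiag hzero hv hv (a := 1 / 2) (b := 0) (by norm_num) le_rfl
      ?_ ?_ ?_ <;> push_cast [hdiag] <;> linarith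
  have hnv_eq : A (c n) v = cartanMatrixCRev n (n + 1) := by
    rcases n with _ | n
    · have := heven v
      rw [← hc.zero] at this
      simp only [cartanMatrixCRev] at hlow ⊢
      omega
    · simp only [cartanMatrixCRev] at hlow ⊢
      omega
  refine ⟨hnv_eq, ?_⟩
  by_contra h
  have hvn' : (A v (c n) : ℚ) ≤ -2 := by exact_mod_cast (by omega : A v (c n) ≤ -2)
  refine hc.false_of_test hA hdiag hzero hv hv (a := 1) (b := 0) (by norm_num) le_rfl
    ?_ ?_ ?_ <;> push_cast [hdiag, hnv_eq] <;> linarith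

theorem end_unique (hA : NoNonnegNullVector A) (hdiag : ∀ i, A i i = 2)
    (hoff : ∀ i j, i ≠ j → A i j ≤ 0) (hzero : ∀ i j, A i j = 0 ↔ A j i = 0)
    (heven : ∀ j, 2 ∣ A α j) (hc : IsCChain A α n c) {v w : ι}
    (hv : v ∉ (range (n + 1)).image c) (hw : w ∉ (range (n + 1)).image c)
    (hadj_v : A (c n) v ≠ 0) (hadj_w : A (c n) w ≠ 0) : v = w := by
  by_contra hvw
  obtain ⟨hnv, hvn⟩ := hc.end_edge hA hdiag hoff hzero heven hv hadj_v
  obtain ⟨hnw, hwn⟩ := hc.end_edge hA hdiag hoff hzero heven hw hadj_w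
  have hvw' : (A v w : ℚ) ≤ 0 := by exact_mod_cast hoff _ _ hvw
  have hwv' : (A w v : ℚ) ≤ 0 := by exact_mod_cast hoff _ _ (Ne.symm hvw)
  refine hc.false_of_test hA hdiag hzero hv hw (a := 1 / 2) (b := 1 / 2) (by norm_num)
    (by norm_num) ?_ ?_ ?_ <;> push_cast [hnv, hvn, hnw, hwn] <;> linarith

theorem extend (hA : NoNonnegNullVector A) (hdiag : ∀ i, A i i = 2)
    (hoff : ∀ i j, i ≠ j → A i j ≤ 0) (hzero : ∀ i j, A i j = 0 ↔ A j i = 0)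
    (heven : ∀ j, 2 ∣ A α j) (hc : IsCChain A α n c) {v : ι}
    (hv : v ∉ (range (n + 1)).image c) (hadj : A (c n) v ≠ 0) :
    IsCChain A α (n + 1) fun k => if k ≤ n then c k else v := by
  obtain ⟨hnv, hvn⟩ := hc.end_edge hA hdiag hoff hzero heven hv hadj
  refine ⟨by simpa using hc.zero, fun k hk l hl => ?_, fun k hk u hu => ?_⟩
  · rcases Nat.le_or_eq_of_le_succ hk with hk | rfl <;>
      rcases Nat.le_or_eq_of_le_succ hl with hl | rfl
    · simpa [hk, hl] using hc.cartan k hk l hl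
    · simp only [hk, if_true, Nat.not_succ_le_self, if_false]
      rcases hk.lt_or_eq with hk | rfl
      · rw [(hc.apply_eq_zero_of_notMem hzero hk hv).1, cartanMatrixCRev_eq_zero (by omega)]
      · exact hnv
    · simp only [hl, if_true, Nat.not_succ_le_self, if_false]
      rcases hl.lt_or_eq with hl | rfl
      · rw [(hc.apply_eq_zero_of_notMem hzero hl hv).2, cartanMatrixCRev_eq_zero (by omega)]
      · simp [hvn, cartanMatrixCRev]
    · simp [hdiag, cartanMatrixCRev]
  · simp only [Nat.lt_succ_iff.1 hk, if_true] at hu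
    by_cases huS : u ∈ (range (n + 1)).image c
    · obtain ⟨l, hl, rfl⟩ := mem_image.1 huS
      exact mem_image.2 ⟨l, by simp at hl ⊢; omega, by simp [Nat.lt_succ_iff.1 (mem_range.1 hl)]⟩
    rcases (Nat.lt_succ_iff.1 hk).lt_or_eq with hk | rfl
    · exact absurd (hc.closed k hk u hu) huS
    · obtain rfl := hc.end_unique hA hdiag hoff hzero heven huS hv hu hadj
      exact mem_image.2 ⟨k + 1, by simp, by simp⟩

end IsCChain

theorem exists_isCChain_image_eq_univ {A : ι → ι → ℤ} {α : ι} (hA : NoNonnegNullVector A)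
    (hdiag : ∀ i, A i i = 2) (hoff : ∀ i j, i ≠ j → A i j ≤ 0)
    (hzero : ∀ i j, A i j = 0 ↔ A j i = 0)
    (hconn : ∀ S : Set ι, S.Nonempty → Sᶜ.Nonempty → ∃ i ∈ S, ∃ j ∈ Sᶜ, A i j ≠ 0)
    (heven : ∀ j, 2 ∣ A α j) :
    ∃ n c, IsCChain A α n c ∧ (range (n + 1)).image c = univ := by
  classical
  have h0 : ∃ c, IsCChain A α 0 c :=
    ⟨fun _ => α, ⟨rfl, fun k hk l hl => by
      obtain rfl := Nat.le_zero.1 hk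
      obtain rfl := Nat.le_zero.1 hl
      simp [hdiag, cartanMatrixCRev], by simp⟩⟩
  set n := Nat.findGreatest (fun m => ∃ c, IsCChain A α m c) (Fintype.card ι)
  obtain ⟨c, hc⟩ : ∃ c, IsCChain A α n c :=
    Nat.findGreatest_spec (P := fun m => ∃ c, IsCChain A α m c) (Nat.zero_le _) h0
  have hend (v : ι) (hv : v ∉ (range (n + 1)).image c) : A (c n) v = 0 := by
    by_contra hadj
    have hext := hc.extend hA hdiag hoff hzero heven hv hadj
    exact Nat.findGreatest_is_greatest n.lt_succ_self (by linarith [hext.card_le]) ⟨_, hext⟩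
  refine ⟨n, c, hc, eq_univ_iff_forall.2 fun u => ?_⟩
  by_contra hu
  obtain ⟨i, hi, j, hj, hij⟩ := hconn ((range (n + 1)).image c)
    ⟨c 0, mem_image_of_mem c (by simp)⟩ ⟨u, hu⟩
  obtain ⟨k, hk, rfl⟩ := mem_image.1 hi
  rcases (Nat.lt_succ_iff.1 (mem_range.1 hk)).lt_or_eq with hk | rfl
  · exact hj (hc.closed k hk j hij)
  · exact hij (hend j hj)

end

/-- Let `(X, Φ, Δ; Y, Φ^∨, Δ^∨)` be the root datum of a split
reductive group whose root system is irreducible of rank `≥ 2`; its Cartan matrix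
`A i j = ⟨α_i, α_j^∨⟩` (indexed by the simple roots `ι = Δ`) has `2`'s on the
diagonal, non-positive off-diagonal entries, symmetric vanishing, is irreducible
(connected), and is of finite type (symmetrizable positive definite).  The simple
roots pair with the cocharacter lattice `Y` through `pair`, with
`pair i (coroot j) = A i j`.  If a simple root `α` satisfies `⟨α, y⟩ ∈ 2ℤ` for all
`y ∈ Y`, then the root system is of type `C_r` and `α` is the (unique) long simple
root: there is a bijection `ι ≃ Fin r` identifying `A` with the `C_r` Cartan matrix
and sending `α` to the long simple root `α_r`. -/
theorem statement7 (ι : Type*) [Fintype ι] [DecidableEq ι]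
    (hcard : 2 ≤ Fintype.card ι)
    (A : ι → ι → ℤ)
    (hdiag : ∀ i, A i i = 2)
    (hoff : ∀ i j, i ≠ j → A i j ≤ 0)
    (hzero : ∀ i j, A i j = 0 ↔ A j i = 0)
    (hconn : ∀ S : Set ι, S.Nonempty → Sᶜ.Nonempty →
      ∃ i ∈ S, ∃ j ∈ Sᶜ, A i j ≠ 0)
    (hfin : ∃ d : ι → ℚ, (∀ i, 0 < d i) ∧ (∀ i j, d i * (A i j : ℚ) = d j * A j i) ∧
      ∀ x : ι → ℚ, x ≠ 0 → 0 < ∑ i, ∑ j, d i * A i j * x i * x j)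
    (Y : Type*) [AddCommGroup Y] (pair : ι → Y →+ ℤ) (coroot : ι → Y)
    (hpair : ∀ i j, pair i (coroot j) = A i j)
    (α : ι) (heven : ∀ y : Y, 2 ∣ pair α y) :
    ∃ (r : ℕ) (eq : ι ≃ Fin r), 2 ≤ r ∧
      (∀ i j, A i j = cartanMatrixC r (eq i) (eq j)) ∧
      ((eq α : ℕ) = r - 1) := by
  obtain ⟨d, hd, -, hQ⟩ := hfin
  have hevenA (j : ι) : 2 ∣ A α j := hpair α j ▸ heven (coroot j)
  obtain ⟨n, c, hc, hcover⟩ := exists_isCChain_image_eq_univ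
    (noNonnegNullVector_of_posDef hd hQ) hdiag hoff hzero hconn hevenA
  set E := Equiv.ofBijective _ (hc.bijective hcover)
  have hcard_eq : Fintype.card ι = n + 1 := by
    rw [← card_univ, ← hcover, card_image_of_injOn hc.injOn, card_range]
  refine ⟨n + 1, E.symm.trans Fin.revPerm, by omega, fun i j => ?_, ?_⟩
  · obtain ⟨p, rfl⟩ := E.surjective i
    obtain ⟨q, rfl⟩ := E.surjective j
    simp [E, cartanMatrixC_rev_rev, hc.cartan p p.is_le q q.is_le]
  · rw [← hc.zero, show c 0 = E 0 from rfl]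
    simp
end

section
/- Let $n = 2m+1$ be odd and $2r = (2a+1)n + (2b - n)$ with $(n+1)/2 \le b < n$ (so $r = an + b$, case (iii) of Theorem 4.1). Then the symplectic collapse of the partition $(n^{2a+1}, 2b-n)$ of $2r$ equals $(n^{2a}, n-1, 2(b-m))$. -/
/-! Write `λ = (n^{2a+1}, c)` and `μ = (n^{2a}, n-1, c+1)` with `n` and `c = 2b - n` odd, `c < n`.
The sums of the `k` largest parts of `μ` and `λ` agree except at `k = 2a+1`, where `μ` falls short
by one; so `λ` dominates `μ`. A symplectic `ν` dominated by `λ` has all parts `≤ n`, so it could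
only beat `μ` at `k = 2a+1` by having `2a+1` parts equal to `n`; by parity it would then have
`2a+2` of them, which exceeds the total `(2a+1)n + c`. -/

/-- The sum of the `k` largest parts of a partition given as a multiset. -/
def topSum (s : Multiset ℕ) (k : ℕ) : ℕ :=
  s.sum - ((s.sort (· ≤ ·)).take (s.card - k)).sum

/-- Dominance order on partitions (of the same number): `Dominates μ ν` means that
for every `k`, the sum of the `k` largest parts of `ν` is at most that of `μ`. -/
def Dominates (mu nu : Multiset ℕ) : Prop := ∀ k, topSum nu k ≤ topSum mu k

/-- A partition is symplectic if every odd part occurs with even multiplicity. -/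
def IsSymplecticPartition (s : Multiset ℕ) : Prop :=
  ∀ p, Odd p → Even (s.count p)

/-- `μ` is the symplectic collapse of `λ`: `μ` is the largest symplectic partition
(of the same number) dominated by `λ` in the dominance order. -/
def IsSymplecticCollapse (lam mu : Multiset ℕ) : Prop :=
  mu.sum = lam.sum ∧ IsSymplecticPartition mu ∧ Dominates lam mu ∧
    ∀ nu : Multiset ℕ, nu.sum = lam.sum → IsSymplecticPartition nu →
      Dominates lam nu → Dominates mu nu

open Multiset

lemma List.eq_replicate_of_forall_le_of_sum_eq {l : List ℕ} {j n : ℕ} (hn : 0 < n)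
    (hle : ∀ x ∈ l, x ≤ n) (hlen : l.length ≤ j) (hsum : l.sum = j * n) :
    l = List.replicate j n := by
  have hall : ∀ x ∈ l, x = n := by
    by_contra! ⟨x, hx, hxn⟩
    have hlt := List.sum_lt_sum id (fun _ ↦ n) hle ⟨x, hx, lt_of_le_of_ne (hle x hx) hxn⟩
    simp only [List.map_id_fun, id_eq, List.map_const', List.sum_replicate, smul_eq_mul] at hlt
    nlinarith
  have hl : l = List.replicate l.length n := List.eq_replicate_iff.2 ⟨rfl, hall⟩
  rw [hl, List.sum_replicate, smul_eq_mul] at hsum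
  rw [hl, Nat.eq_of_mul_eq_mul_right hn hsum]

lemma Multiset.count_mul_le_sum (s : Multiset ℕ) (n : ℕ) : s.count n * n ≤ s.sum := by
  obtain ⟨u, hu⟩ :=
    Multiset.le_iff_exists_add.1 (le_count_iff_replicate_le.1 (le_refl (s.count n)))
  calc s.count n * n = (replicate (s.count n) n).sum := by simp
    _ ≤ (replicate (s.count n) n + u).sum := by rw [sum_add]; exact Nat.le_add_right _ _
    _ = s.sum := by rw [← hu]

lemma Multiset.sum_sort (s : Multiset ℕ) : (s.sort (· ≤ ·)).sum = s.sum := by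
  rw [← sum_coe, sort_eq]

lemma topSum_eq_sum_drop (s : Multiset ℕ) (k : ℕ) :
    topSum s k = ((s.sort (· ≤ ·)).drop (card s - k)).sum := by
  have h := congrArg List.sum (List.take_append_drop (card s - k) (s.sort (· ≤ ·)))
  rw [List.sum_append, sum_sort] at h
  rw [topSum]
  omega

lemma Multiset.sort_replicate_add {t : Multiset ℕ} {j n : ℕ} (ht : ∀ x ∈ t, x ≤ n) :
    (replicate j n + t).sort (· ≤ ·) = t.sort (· ≤ ·) ++ List.replicate j n := by
  refine List.Perm.eq_of_pairwise' (pairwise_sort _ _) ?_ ?_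
  · refine List.pairwise_append.2
      ⟨pairwise_sort _ _, List.pairwise_replicate.2 (Or.inr le_rfl), fun x hx y hy ↦ ?_⟩
    rw [List.eq_of_mem_replicate hy]
    exact ht x ((mem_sort _).1 hx)
  · rw [← coe_eq_coe, sort_eq, ← coe_add, sort_eq, coe_replicate, add_comm]

lemma topSum_replicate_add {t : Multiset ℕ} {j n : ℕ} (ht : ∀ x ∈ t, x ≤ n) (k : ℕ) :
    topSum (replicate j n + t) k = min k j * n + topSum t (k - j) := by
  rw [topSum_eq_sum_drop, topSum_eq_sum_drop, sort_replicate_add ht, List.drop_append,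
    List.sum_append, List.drop_replicate, List.sum_replicate, smul_eq_mul, length_sort,
    card_add, card_replicate, add_comm]
  rw [show j - (j + card t - k - card t) = min k j by omega]
  rcases le_total j k with h | h
  · rw [show j + card t - k = card t - (k - j) by omega]
  · rw [List.drop_eq_nil_of_le (by rw [length_sort]; omega),
      List.drop_eq_nil_of_le (by rw [length_sort]; omega)]

lemma topSum_zero_left (k : ℕ) : topSum 0 k = 0 := by
  simp [topSum]

lemma topSum_replicate (j n k : ℕ) : topSum (replicate j n) k = min k j * n := by
  simpa [topSum_zero_left] using topSum_replicate_add (t := 0) (j := j) (n := n) (by simp) k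

lemma le_topSum_one {s : Multiset ℕ} {x : ℕ} (hx : x ∈ s) : x ≤ topSum s 1 := by
  have hx' : x ∈ s.sort (· ≤ ·) := (mem_sort _).2 hx
  rw [topSum_eq_sum_drop, ← length_sort (· ≤ ·),
    List.drop_length_sub_one (List.ne_nil_of_mem hx'), List.sum_singleton]
  exact (pairwise_sort s _).rel_getLast hx'

lemma le_count_of_topSum_eq_mul {s : Multiset ℕ} {j n : ℕ} (hn : 0 < n)
    (hle : ∀ x ∈ s, x ≤ n) (htop : topSum s j = j * n) : j ≤ s.count n := by
  rw [topSum_eq_sum_drop] at htop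
  have hdrop : (s.sort (· ≤ ·)).drop (card s - j) = List.replicate j n :=
    List.eq_replicate_of_forall_le_of_sum_eq hn
      (fun x hx ↦ hle x ((mem_sort _).1 (List.mem_of_mem_drop hx)))
      (by rw [List.length_drop, length_sort]; omega) htop
  calc j = (List.replicate j n).count n := (List.count_replicate_self ..).symm
    _ ≤ (s.sort (· ≤ ·)).count n := hdrop ▸ (List.drop_sublist _ _).count_le n
    _ = s.count n := by rw [← coe_count, sort_eq]

lemma topSum_ne_mul_of_isSymplecticPartition {s : Multiset ℕ} {j n : ℕ}
    (hs : IsSymplecticPartition s) (hn : Odd n) (hj : Odd j) (hle : ∀ x ∈ s, x ≤ n)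
    (hsum : s.sum < (j + 1) * n) : topSum s j ≠ j * n := by
  intro htop
  have hcount : j + 1 ≤ s.count n := by
    rcases (le_count_of_topSum_eq_mul hn.pos hle htop).lt_or_eq with h | h
    · exact h
    · exact absurd (hs n hn) (h ▸ Nat.not_even_iff_odd.2 hj)
  nlinarith [count_mul_le_sum s n]

section Collapse

variable {n c : ℕ} (a : ℕ)

lemma topSum_replicate_add_singleton (hcn : c ≤ n) (k : ℕ) :
    topSum (replicate (2 * a + 1) n + {c}) k =
      min k (2 * a + 1) * n + min (k - (2 * a + 1)) 1 * c := by
  rw [topSum_replicate_add (by simpa using hcn), ← replicate_one, topSum_replicate]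

lemma topSum_replicate_add_pair (hcn : c + 1 ≤ n - 1) (k : ℕ) :
    topSum (replicate (2 * a) n + {n - 1, c + 1}) k =
      min k (2 * a) * n + (min (k - 2 * a) 1 * (n - 1) + min (k - 2 * a - 1) 1 * (c + 1)) := by
  have hpair : ({n - 1, c + 1} : Multiset ℕ) = replicate 1 (n - 1) + replicate 1 (c + 1) := by
    simp
  rw [hpair, topSum_replicate_add, topSum_replicate_add (by simpa using hcn), topSum_replicate]
  simp only [mem_add, mem_replicate]
  omega

lemma topSum_replicate_add_pair_of_ne (hcn : c + 1 ≤ n - 1) {k : ℕ} (hk : k ≠ 2 * a + 1) :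
    topSum (replicate (2 * a) n + {n - 1, c + 1}) k =
      topSum (replicate (2 * a + 1) n + {c}) k := by
  rw [topSum_replicate_add_singleton a (by omega), topSum_replicate_add_pair a hcn]
  rcases Nat.lt_or_gt_of_ne hk with hlt | hgt
  · rw [min_eq_left hlt.le, min_eq_left (show k ≤ 2 * a by omega), show k - 2 * a = 0 by omega,
      show k - (2 * a + 1) = 0 by omega]
    simp
  · rw [min_eq_right (by omega), min_eq_right (by omega), min_eq_right (by omega),
      min_eq_right (by omega), min_eq_right (by omega)]
    have hn : n - 1 + 1 = n := by omega
    linarith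

lemma topSum_replicate_add_pair_middle (hcn : c + 1 ≤ n - 1) :
    topSum (replicate (2 * a) n + {n - 1, c + 1}) (2 * a + 1) + 1 = (2 * a + 1) * n := by
  rw [topSum_replicate_add_pair a hcn, min_eq_right (by omega),
    show 2 * a + 1 - 2 * a = 1 by omega, Nat.sub_self, min_self, Nat.zero_min]
  have hn : n - 1 + 1 = n := by omega
  linarith

theorem isSymplecticCollapse_replicate_add_singleton (hn : Odd n) (hc : Odd c) (hcn : c < n) :
    IsSymplecticCollapse (replicate (2 * a + 1) n + {c})
      (replicate (2 * a) n + {n - 1, c + 1}) := by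
  rw [Nat.odd_iff] at hn hc
  have hcn' : c + 1 ≤ n - 1 := by omega
  have htop_one : topSum (replicate (2 * a + 1) n + {c}) 1 = n := by
    rw [topSum_replicate_add_singleton a hcn.le]
    simp
  have htop_middle : topSum (replicate (2 * a + 1) n + {c}) (2 * a + 1) = (2 * a + 1) * n := by
    rw [topSum_replicate_add_singleton a hcn.le]
    simp
  have hsum : (replicate (2 * a + 1) n + {c}).sum = (2 * a + 1) * n + c := by
    simp only [sum_add, sum_replicate, smul_eq_mul, sum_singleton]
  have hpair_middle := topSum_replicate_add_pair_middle a hcn'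
  refine ⟨?_, ?_, fun k ↦ ?_, fun ν hνsum hν hdom k ↦ ?_⟩
  · simp only [hsum, insert_eq_cons, add_cons, sum_cons, sum_add, sum_replicate, smul_eq_mul,
      sum_singleton]
    have hn1 : n - 1 + 1 = n := by omega
    linarith
  · intro p hp
    rw [Nat.odd_iff] at hp
    simp only [insert_eq_cons, count_add, count_replicate, count_cons, count_singleton]
    split_ifs <;> first | omega | simp
  · rcases eq_or_ne k (2 * a + 1) with rfl | hk
    · omega
    · exact (topSum_replicate_add_pair_of_ne a hcn' hk).le
  · rcases eq_or_ne k (2 * a + 1) with rfl | hk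
    · have hle : ∀ x ∈ ν, x ≤ n := fun x hx ↦
        (le_topSum_one hx).trans ((hdom 1).trans_eq htop_one)
      have hne := topSum_ne_mul_of_isSymplecticPartition hν (Nat.odd_iff.2 hn)
        (odd_two_mul_add_one a) hle (by rw [hνsum, hsum]; linarith)
      have hdom_middle := hdom (2 * a + 1)
      omega
    · exact (hdom k).trans_eq (topSum_replicate_add_pair_of_ne a hcn' hk).symm

end Collapse

theorem statement11_general (a b m : ℕ) (hb1 : m + 1 ≤ b) (hb2 : b < 2 * m + 1) :
    IsSymplecticCollapse
      (Multiset.replicate (2 * a + 1) (2 * m + 1) + {2 * b - (2 * m + 1)})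
      (Multiset.replicate (2 * a) (2 * m + 1) + {2 * m, 2 * (b - m)}) := by
  have h := isSymplecticCollapse_replicate_add_singleton a (odd_two_mul_add_one m)
    (Nat.odd_iff.2 (by omega) : Odd (2 * b - (2 * m + 1))) (by omega)
  rwa [show 2 * m + 1 - 1 = 2 * m by omega,
    show 2 * b - (2 * m + 1) + 1 = 2 * (b - m) by omega] at h

/-- Let `n = 2m+1` be odd, `r = an + b` with
`(n+1)/2 = m+1 ≤ b < n`, so `2r = (2a+1)n + (2b-n)`.  Then the symplectic collapse
of the partition `(n^{2a+1}, 2b-n)` of `2r` is `(n^{2a}, n-1, 2(b-m))`. -/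
theorem statement11 (r a b m : ℕ) (hb1 : m + 1 ≤ b) (hb2 : b < 2 * m + 1)
    (hr : r = a * (2 * m + 1) + b) :
    IsSymplecticCollapse
      (Multiset.replicate (2 * a + 1) (2 * m + 1) + {2 * b - (2 * m + 1)})
      (Multiset.replicate (2 * a) (2 * m + 1) + {2 * m, 2 * (b - m)}) :=
  statement11_general a b m hb1 hb2
end
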